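/- Let G be a subgroup of A × B × C and let Q = G/(S_A × S_B × S_C) where S_A, S_B, S_C are the one-component subgroups of G. Then the images E_AB and E_AC of S_AB and S_AC in Q commute element-by-element: for all e ∈ E_AB and f ∈ E_AC, ef = fe. -/

import Mathlib

/-! The commutator of `s` and `t` has trivial `B`-component because `t.2.1 = 1` and trivial
`C`-component because `s.2.2 = 1`, so it lies in `S_A`, which is contained in the kernel of `G → Q`. -/

open scoped commutatorElement

theorem QuotientGroup.commute_mk_of_commutatorElement_mem {G : Type*} [Group G] {K : Subgroup G}
    [K.Normal] {s t : G} (h : ⁅s, t⁆ ∈ K) :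
    Commute (QuotientGroup.mk' K s) (QuotientGroup.mk' K t) := by
  rw [← commutatorElement_eq_one_iff_commute, ← map_commutatorElement,
    QuotientGroup.mk'_apply, QuotientGroup.eq_one_iff]
  exact h

section ThreeFactors

variable {A B C : Type*} [Group A] [Group B] [Group C]

theorem Prod.commutatorElement_snd_fst_eq_one (s : A × B × C) {t : A × B × C} (ht : t.2.1 = 1) :
    ⁅s, t⁆.2.1 = 1 := by
  simp [commutatorElement_def, ht]

theorem Prod.commutatorElement_snd_snd_eq_one {s : A × B × C} (t : A × B × C) (hs : s.2.2 = 1) :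
    ⁅s, t⁆.2.2 = 1 := by
  simp [commutatorElement_def, hs]

theorem Subgroup.mem_of_snd_eq_one {G N : Subgroup (A × B × C)}
    (hN : ∀ a : A, (a, (1 : B), (1 : C)) ∈ G → (a, (1 : B), (1 : C)) ∈ N)
    {g : A × B × C} (hg : g ∈ G) (hg₂ : g.2.1 = 1) (hg₃ : g.2.2 = 1) : g ∈ N := by
  have hg_eq : g = (g.1, 1, 1) := Prod.ext rfl (Prod.ext hg₂ hg₃)
  rw [hg_eq] at hg ⊢
  exact hN _ hg

end ThreeFactors

theorem stmt8 {A B C : Type*} [Group A] [Group B] [Group C]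
    (G N : Subgroup (A × B × C))
    (hN : ∀ g : A × B × C, g ∈ N ↔
      (g.1, (1 : B), (1 : C)) ∈ G ∧ ((1 : A), g.2.1, (1 : C)) ∈ G ∧
        ((1 : A), (1 : B), g.2.2) ∈ G)
    [(N.subgroupOf G).Normal] :
    ∀ (s t : A × B × C) (hs : s ∈ G) (ht : t ∈ G), s.2.2 = 1 → t.2.1 = 1 →
      QuotientGroup.mk' (N.subgroupOf G) ⟨s, hs⟩ *
          QuotientGroup.mk' (N.subgroupOf G) ⟨t, ht⟩ =
        QuotientGroup.mk' (N.subgroupOf G) ⟨t, ht⟩ *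
          QuotientGroup.mk' (N.subgroupOf G) ⟨s, hs⟩ := by
  intro s t hs ht hs₃ ht₂
  have hS_A : ∀ a : A, (a, (1 : B), (1 : C)) ∈ G → (a, (1 : B), (1 : C)) ∈ N :=
    fun a ha => (hN _).mpr ⟨ha, G.one_mem, G.one_mem⟩
  have hcoe : ((⁅(⟨s, hs⟩ : G), ⟨t, ht⟩⁆ : G) : A × B × C) = ⁅s, t⁆ :=
    map_commutatorElement G.subtype _ _
  refine QuotientGroup.commute_mk_of_commutatorElement_mem ?_
  rw [Subgroup.mem_subgroupOf]
  refine Subgroup.mem_of_snd_eq_one hS_A (SetLike.coe_mem _) ?_ ?_ <;> rw [hcoe]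
  · exact Prod.commutatorElement_snd_fst_eq_one s ht₂
  · exact Prod.commutatorElement_snd_snd_eq_one t hs₃
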